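/- For any x ∈ [n]^k, the image under p of the principal order ideal x^↓ in [n]^k equals the principal order ideal generated by p(x) in B_{1_G}(k,n); that is, p({z ∈ [n]^k : z ≤ x}) = {y ∈ B_{1_G}(k,n) : y ≼ p(x)}. -/

import Mathlib

/-- Action of a permutation on tuples: `g(x) = (x_{g⁻¹(1)},…,x_{g⁻¹(k)})`. -/
def act {k n : ℕ} (g : Equiv.Perm (Fin k)) (x : Fin k → Fin n) : Fin k → Fin n :=
  fun i => x (g⁻¹ i)

/-- `B_{1_G}(k,n)`: lexicographically minimal `G`-orbit representatives in `[n]^k`. -/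
def Btriv (k n : ℕ) (G : Subgroup (Equiv.Perm (Fin k))) : Set (Fin k → Fin n) :=
  {x | ∀ g : G, toLex x ≤ toLex (act (g : Equiv.Perm (Fin k)) x)}

/-!
Permuting coordinates is an automorphism of the componentwise order, so `z ≤ x` iff
`h(z) ≤ h(x)`; hence `p(z) = h(z) ≤ h(x)`, a `G`-translate of `p(x)`. Conversely, if a
lex-minimal representative `y` satisfies `y ≤ c(x)` with `c ∈ G`, then `z := c⁻¹(y) ≤ x`, and
since `y` is the lex-minimum of the orbit of `z`, `p(z) = y`.
-/

section Act

variable {k n : ℕ}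

theorem act_mul (g h : Equiv.Perm (Fin k)) (x : Fin k → Fin n) :
    act (g * h) x = act g (act h x) := by
  funext i
  simp [act, mul_inv_rev]

theorem act_inv_act (g : Equiv.Perm (Fin k)) (x : Fin k → Fin n) : act g⁻¹ (act g x) = x := by
  funext i
  simp [act]

theorem act_act_inv (g : Equiv.Perm (Fin k)) (x : Fin k → Fin n) : act g (act g⁻¹ x) = x := by
  simpa using act_inv_act g⁻¹ x

theorem act_le_act_iff (g : Equiv.Perm (Fin k)) {x y : Fin k → Fin n} :
    act g x ≤ act g y ↔ x ≤ y := by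
  refine ⟨fun h i => ?_, fun h i => h _⟩
  simpa [act] using h (g i)

end Act

section LexMin

variable {k n : ℕ} {G : Subgroup (Equiv.Perm (Fin k))} {p : (Fin k → Fin n) → (Fin k → Fin n)}

theorem mem_Btriv_of_lexMin (hp1 : ∀ x, ∃ g : G, p x = act (g : Equiv.Perm (Fin k)) x)
    (hp2 : ∀ x, ∀ g : G, toLex (p x) ≤ toLex (act (g : Equiv.Perm (Fin k)) x))
    (z : Fin k → Fin n) : p z ∈ Btriv k n G := by
  obtain ⟨h, hh⟩ := hp1 z
  intro g
  rw [hh, ← act_mul, ← Subgroup.coe_mul]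
  exact hh ▸ hp2 z (g * h)

theorem lexMin_eq_of_mem_Btriv (hp1 : ∀ x, ∃ g : G, p x = act (g : Equiv.Perm (Fin k)) x)
    (hp2 : ∀ x, ∀ g : G, toLex (p x) ≤ toLex (act (g : Equiv.Perm (Fin k)) x))
    {y w : Fin k → Fin n} (hy : y ∈ Btriv k n G) (c : G)
    (hyw : y = act (c : Equiv.Perm (Fin k)) w) : p w = y := by
  subst hyw
  obtain ⟨h, hh⟩ := hp1 w
  refine toLex.injective (le_antisymm (hp2 w c) ?_)
  have := hy (h * c⁻¹)
  rwa [Subgroup.coe_mul, Subgroup.coe_inv, act_mul, act_inv_act, ← hh] at this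

end LexMin

/-- For the map `p` taking a tuple to the lexicographic minimum of its `G`-orbit,
the image of the principal order ideal `x^↓ ⊆ [n]^k` (componentwise order) is the
principal order ideal of `p(x)` in `B_{1_G}(k,n)` for the order
`y ≼ y' ↔ ∃ g ∈ G, y ≤ g(y')`. -/
theorem stmt4 (k n : ℕ) (G : Subgroup (Equiv.Perm (Fin k)))
    (p : (Fin k → Fin n) → (Fin k → Fin n))
    (hp1 : ∀ x, ∃ g : G, p x = act (g : Equiv.Perm (Fin k)) x)
    (hp2 : ∀ x, ∀ g : G, toLex (p x) ≤ toLex (act (g : Equiv.Perm (Fin k)) x))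
    (x : Fin k → Fin n) :
    p '' {z | z ≤ x} =
      {y | y ∈ Btriv k n G ∧ ∃ g : G, ∀ i, y i ≤ act (g : Equiv.Perm (Fin k)) (p x) i} := by
  obtain ⟨h, hh⟩ := hp1 x
  ext y
  constructor
  · rintro ⟨z, hz, rfl⟩
    obtain ⟨g, hg⟩ := hp1 z
    refine ⟨mem_Btriv_of_lexMin hp1 hp2 z, g * h⁻¹, ?_⟩
    rw [hg, hh, ← act_mul, Subgroup.coe_mul, Subgroup.coe_inv, inv_mul_cancel_right]
    exact (act_le_act_iff g).2 hz
  · rintro ⟨hy, g, hg⟩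
    set c : G := g * h
    have hyc : y ≤ act (c : Equiv.Perm (Fin k)) x := by
      rwa [Subgroup.coe_mul, act_mul, ← hh]
    refine ⟨act (c : Equiv.Perm (Fin k))⁻¹ y, ?_, ?_⟩
    · rwa [Set.mem_ofPred_eq, ← act_le_act_iff (c : Equiv.Perm (Fin k)), act_act_inv]
    · exact lexMin_eq_of_mem_Btriv hp1 hp2 hy c (act_act_inv _ y).symm
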